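/- arXiv:2203.00405 — 4 statements merged into one kernel-verified Lean document; each statement's English description precedes it below -/
import Mathlib

section
/- Let n ≥ 2, let S_n be the symmetric group with standard Coxeter generators S = {s_1, …, s_{n−1}}, and let k ∈ ℕ. Then for all u, v ∈ S_n: u ≤ v in the Bruhat order if and only if P^{S∖{s_i}}(u) ≤_{L^k} P^{S∖{s_i}}(v) for every i ∈ {1, …, n−1}. Consequently the induced subposet Im(φ_k) of the product of the posets (S_n^{S∖{s_i}}, ≤_{L^k}), where φ_k(w) = (P^{S∖{s_1}}(w), …, P^{S∖{s_{n−1}}}(w)), is isomorphic to (S_n, ≤). -/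
/-!
Formalization of definitions from "orders on Coxeter groups associated with sets of
reflections" (k-intermediate orders, k-Bruhat graphs, k-absolute orders).

All definitions are parametrized by a length function `len : W → ℕ` and a set of
"reflections"; they are instantiated either with a `CoxeterSystem` (`cs.length` and
`cs.IsReflection`) or concretely with the symmetric group `Equiv.Perm (Fin n)`
(inversion number and transpositions).
-/

namespace KBruhatPaper

variable {W : Type*} [Group W]

/-- One step in the directed graph associated with `len` and the set `X ⊆ T`:
`v` is obtained from `u` by multiplying on the left by an element `t ∈ X`,
with `len u < len v`. -/
def Step (len : W → ℕ) (X : Set W) (u v : W) : Prop :=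
  ∃ t ∈ X, v = t * u ∧ len u < len v

/-- The partial order `≤_{L^X}`: `u ≤_{L^X} v` iff `u = v` or there are
`t₁, …, t_r ∈ X` with `len u < len (t₁ u) < ⋯ < len (t_r ⋯ t₁ u)` and
`t_r ⋯ t₁ u = v`.  For `X = T` (all reflections) this is the Bruhat order. -/
def leL (len : W → ℕ) (X : Set W) : W → W → Prop :=
  Relation.ReflTransGen (Step len X)

/-- The strict order `<_{L^X}`. -/
def ltL (len : W → ℕ) (X : Set W) (u v : W) : Prop :=
  leL len X u v ∧ u ≠ v

/-- The covering relation of the poset `(W, ≤_{L^X})`. -/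
def CovL (len : W → ℕ) (X : Set W) (u v : W) : Prop :=
  ltL len X u v ∧ ¬∃ w, ltL len X u w ∧ ltL len X w v

/-- `N(v) = {t ∈ T : len (t * v) < len v}`. -/
def NSet (len : W → ℕ) (T : Set W) (v : W) : Set W :=
  {t ∈ T | len (t * v) < len v}

/-- A reflection subgroup: a subgroup generated by a subset of `T`. -/
def IsReflSubgroup (T : Set W) (W' : Subgroup W) : Prop :=
  ∃ A ⊆ T, W' = Subgroup.closure A

/-- The canonical Coxeter generators `S' = {t ∈ T : N(t) ∩ W' = {t}}` of a
reflection subgroup `W'`. -/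
def CanGens (len : W → ℕ) (T : Set W) (W' : Subgroup W) : Set W :=
  {t ∈ T | NSet len T t ∩ (W' : Set W) = {t}}

/-- The relation `⊑'` on `T`: `t ⊑' t'` iff `t = t'` or there is a dihedral
reflection subgroup `W'` (i.e. with exactly two canonical generators) containing
`t` and `t'`, together with a directed path from `t` to `t'` in the Bruhat graph
restricted to `W'`. -/
def SqLe' (len : W → ℕ) (T : Set W) (t t' : W) : Prop :=
  t = t' ∨ ∃ W' : Subgroup W, IsReflSubgroup T W' ∧ t ∈ W' ∧ t' ∈ W' ∧
    (CanGens len T W').encard = 2 ∧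
    ∃ (n : ℕ) (x : ℕ → W), x 0 = t ∧ x n = t' ∧ (∀ i ≤ n, x i ∈ W') ∧
      ∀ i < n, x i * (x (i + 1))⁻¹ ∈ T ∧ ltL len T (x i) (x (i + 1))

/-- The relation `⊑` on `T`: the transitive closure of `⊑'`. -/
def SqLe (len : W → ℕ) (T : Set W) : W → W → Prop :=
  Relation.TransGen (SqLe' len T)

/-- `X ⊆ T` is an order ideal of `(T, ⊑)`. -/
def IsIdeal (len : W → ℕ) (T : Set W) (X : Set W) : Prop :=
  X ⊆ T ∧ ∀ t t', SqLe len T t t' → t' ∈ X → t ∈ X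

/-- `PFactor len J w wup wJ` expresses that `w = w^J ⬝ w_J` is the (unique) parabolic
factorization of `w` with respect to the set `J` of simple reflections:
`wup = w^J = P^J(w)` and `wJ = w_J ∈ W_J`. -/
def PFactor (len : W → ℕ) (J : Set W) (w wup wJ : W) : Prop :=
  wJ ∈ Subgroup.closure J ∧ (∀ s ∈ J, len wup < len (wup * s)) ∧
    w = wup * wJ ∧ len w = len wup + len wJ

/-- `QFactor len J w wJ wq` expresses that `w = w'_J ⬝ (ᴶw)` is the (unique) parabolic
factorization of `w` with respect to the set `J` of simple reflections:
`wJ = w'_J ∈ W_J` and `wq = ᴶw = Q^J(w)`. -/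
def QFactor (len : W → ℕ) (J : Set W) (w wJ wq : W) : Prop :=
  wJ ∈ Subgroup.closure J ∧ (∀ s ∈ J, len wq < len (s * wq)) ∧
    w = wJ * wq ∧ len w = len wJ + len wq

/-- A chain `e = x₀ → x₁ → ⋯ → x_r = w` of `r` steps in the directed graph with
steps from `X` (for `X = T_k`, a path from `e` to `w` in the `k`-Bruhat graph). -/
def ChainOfLen (len : W → ℕ) (X : Set W) (w : W) (r : ℕ) : Prop :=
  ∃ x : ℕ → W, x 0 = 1 ∧ x r = w ∧ ∀ i < r, Step len X (x i) (x (i + 1))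

/-- `HasAbsLen len X w r` : `r` is the `X`-absolute length of `w`, i.e. the least
number of steps from `X` needed to reach `w` from the identity (for `X = T_k`,
the distance from `e` to `w` in the `k`-Bruhat graph, `ℓ_k(w)`). -/
def HasAbsLen (len : W → ℕ) (X : Set W) (w : W) (r : ℕ) : Prop :=
  IsLeast {r | ChainOfLen len X w r} r

section CoxeterSystem

variable {B : Type*} {M : CoxeterMatrix B}

/-- The set `T` of reflections of a Coxeter system. -/
def TSet (cs : CoxeterSystem M W) : Set W := {t | cs.IsReflection t}

/-- The set `T_k = {t ∈ T : ℓ(t) ≤ 2k + 1}`. -/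
def TkSet (cs : CoxeterSystem M W) (k : ℕ) : Set W :=
  {t | cs.IsReflection t ∧ cs.length t ≤ 2 * k + 1}

/-- The `k`-intermediate order `≤_{L^k}` on `W`. -/
def leLk (cs : CoxeterSystem M W) (k : ℕ) : W → W → Prop :=
  leL cs.length (TkSet cs k)

/-- The strict `k`-intermediate order `<_{L^k}` on `W`. -/
def ltLk (cs : CoxeterSystem M W) (k : ℕ) : W → W → Prop :=
  ltL cs.length (TkSet cs k)

/-- The Bruhat order on `W`. -/
def bruhatLE (cs : CoxeterSystem M W) : W → W → Prop :=
  leL cs.length (TSet cs)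

/-- The strict Bruhat order on `W`. -/
def bruhatLT (cs : CoxeterSystem M W) : W → W → Prop :=
  ltL cs.length (TSet cs)

end CoxeterSystem

section SymmetricGroup

/-- The number of inversions of a permutation of `Fin n`; this is the Coxeter
length of the permutation with respect to the standard Coxeter presentation
of the symmetric group. -/
def invCount {n : ℕ} (w : Equiv.Perm (Fin n)) : ℕ :=
  (Finset.univ.filter fun p : Fin n × Fin n => p.1 < p.2 ∧ w p.2 < w p.1).card

/-- The set of transpositions: the reflections of the symmetric group. -/
def swaps (n : ℕ) : Set (Equiv.Perm (Fin n)) := {σ | σ.IsSwap}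

/-- The set of simple transpositions `s_i = (i, i+1)`: the standard Coxeter
generators of the symmetric group. -/
def simples (n : ℕ) : Set (Equiv.Perm (Fin n)) :=
  {σ | ∃ i j : Fin n, (i : ℕ) + 1 = (j : ℕ) ∧ σ = Equiv.swap i j}

/-- The set `T_k` for the symmetric group: transpositions of length at most `2k + 1`. -/
def swapsK (n k : ℕ) : Set (Equiv.Perm (Fin n)) :=
  {σ | σ.IsSwap ∧ invCount σ ≤ 2 * k + 1}

end SymmetricGroup

end KBruhatPaper

open KBruhatPaper

/-!
Write `cornerCount w i m` for the number of positions `x < i` with `w x < m`. By the tableau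
criterion, `u ≤ v` in the Bruhat order iff `cornerCount v i m ≤ cornerCount u i m` for all
`i, m`: a length-increasing transposition only removes dots from corners, and conversely, if
`u ≠ v` satisfy the inequalities, exchanging the values of `v` at the first position `p` where
`u` and `v` differ and at a suitably minimal later position `q` gives a Bruhat predecessor of `v`
that still satisfies them.

Right multiplication by `W_J`, `J = S \ {s_b}`, permutes the positions below `b` among
themselves, so `u` and `P^J(u)` have the same counts `cornerCount · b m`, and `P^J(u)` is the
Grassmannian permutation (increasing below `b` and from `b` on) determined by them. Between two
Grassmannian permutations whose counts at `b` are comparable one can climb by exchanging two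
adjacent values `a, a + 1` lying in different blocks. Such a step is left multiplication by a
simple reflection, of length `1 ≤ 2k + 1`, so it is a step of every `≤_{L^k}`.
-/

namespace KBruhatPaper

open Equiv Finset

theorem leL_mono {W : Type*} [Group W] {len : W → ℕ} {X Y : Set W} (hXY : X ⊆ Y) {u v : W}
    (h : leL len X u v) : leL len Y u v :=
  Relation.ReflTransGen.mono (fun _ _ ⟨t, ht, h₁, h₂⟩ => ⟨t, hXY ht, h₁, h₂⟩) _ _ h

variable {n : ℕ}

/-! ### Inversions -/

theorem swap_lt_swap_iff {a b x y : Fin n} (hab : (a : ℕ) + 1 = b) (hab' : ¬(x = a ∧ y = b))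
    (hba : ¬(x = b ∧ y = a)) : swap a b x < swap a b y ↔ x < y := by
  simp only [swap_apply_def, Fin.ext_iff, Fin.lt_def] at *
  split_ifs <;> omega

theorem invCount_one : invCount (1 : Perm (Fin n)) = 0 := by
  rw [invCount, card_eq_zero, filter_eq_empty_iff]
  exact fun p _ h => lt_asymm h.1 h.2

theorem invCount_mul_swap_of_lt {a b : Fin n} (hab : (a : ℕ) + 1 = b) {w : Perm (Fin n)}
    (h : w a < w b) : invCount (w * swap a b) = invCount w + 1 := by
  have hab' : a < b := Fin.lt_def.2 (by omega)
  calc invCount (w * swap a b)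
      = ∑ pr : Fin n × Fin n,
          if swap a b pr.1 < swap a b pr.2 ∧ w pr.2 < w pr.1 then 1 else 0 := by
        rw [invCount, card_filter]
        exact Fintype.sum_equiv (prodCongr (swap a b) (swap a b)) _ _ fun pr => by
          simp only [prodCongr_apply, Prod.map, swap_apply_self, Perm.mul_apply]; congr
    _ = ∑ pr : Fin n × Fin n, ((if pr.1 < pr.2 ∧ w pr.2 < w pr.1 then 1 else 0) +
          if pr = (b, a) then 1 else 0) := by
        refine sum_congr rfl fun ⟨x, y⟩ _ => ?_
        by_cases hba : x = b ∧ y = a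
        · obtain ⟨rfl, rfl⟩ := hba
          simp [h, hab', not_lt_of_gt hab']
        by_cases hab'' : x = a ∧ y = b
        · obtain ⟨rfl, rfl⟩ := hab''
          simp [not_lt_of_gt h, hab'.ne]
        simp only [swap_lt_swap_iff hab hab'' hba]
        simp [hba]
    _ = invCount w + 1 := by rw [sum_add_distrib, sum_ite_eq', invCount, card_filter]; simp

theorem invCount_mul_swap_of_gt {a b : Fin n} (hab : (a : ℕ) + 1 = b) {w : Perm (Fin n)}
    (h : w b < w a) : invCount (w * swap a b) + 1 = invCount w := by
  have := invCount_mul_swap_of_lt hab (w := w * swap a b) (by simpa using h)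
  rwa [mul_assoc, swap_mul_self, mul_one, eq_comm] at this

theorem invCount_swap {a b : Fin n} (hab : (a : ℕ) + 1 = b) : invCount (swap a b) = 1 := by
  simpa [invCount_one] using invCount_mul_swap_of_lt hab (w := 1) (Fin.lt_def.2 (by simp; omega))

theorem invCount_le_mul_swap_add_one {a b : Fin n} (hab : (a : ℕ) + 1 = b) (w : Perm (Fin n)) :
    invCount w ≤ invCount (w * swap a b) + 1 := by
  have hne : w a ≠ w b := w.injective.ne fun h => by simp [h] at hab
  rcases hne.lt_or_gt with h | h
  · rw [invCount_mul_swap_of_lt hab h]; omega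
  · rw [invCount_mul_swap_of_gt hab h]

/-- Induction on `q - p` through `(p q) = (r q) (p r) (r q)` with `r + 1 = q`. -/
theorem invCount_lt_mul_swap {p q : Fin n} (hpq : p < q) {w : Perm (Fin n)} (h : w p < w q) :
    invCount w < invCount (w * swap p q) := by
  obtain ⟨g, hg⟩ : ∃ g, (q : ℕ) = p + g + 1 := ⟨q - p - 1, by omega⟩
  induction g generalizing w q with
  | zero => rw [invCount_mul_swap_of_lt (by omega) h]; omega
  | succ g ih =>
    set r : Fin n := ⟨q - 1, by omega⟩
    have hrq : (r : ℕ) + 1 = q := by simp [r]; omega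
    have hpr : p < r := Fin.lt_def.2 (by simp [r]; omega)
    have hrq' : r ≠ q := Fin.ne_of_val_ne (by omega)
    have hswap : swap p q = swap r q * swap p r * swap r q := by
      rw [swap_mul_swap_mul_swap hpr.ne hpq.ne, swap_comm]
    have h₁ : (w * swap r q) p < (w * swap r q) r := by
      simpa [swap_apply_of_ne_of_ne hpr.ne hpq.ne] using h
    have ih' := ih hpr h₁ (by simp [r]; omega)
    rw [hswap, ← mul_assoc, ← mul_assoc]
    rcases (w.injective.ne hrq').lt_or_gt with hr | hr
    · have := invCount_mul_swap_of_lt hrq hr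
      have := invCount_le_mul_swap_add_one hrq (w * swap r q * swap p r)
      omega
    · have := invCount_mul_swap_of_gt hrq hr
      have h₂ : (w * swap r q * swap p r) r < (w * swap r q * swap p r) q := by
        simpa [swap_apply_of_ne_of_ne hpr.ne hpq.ne, swap_apply_of_ne_of_ne hpq.ne' hrq'.symm]
          using h.trans hr
      have := invCount_mul_swap_of_lt hrq h₂
      omega

theorem lt_of_invCount_lt_mul_swap {p q : Fin n} (hpq : p < q) {w : Perm (Fin n)}
    (h : invCount w < invCount (w * swap p q)) : w p < w q := by
  refine (w.injective.ne hpq.ne).lt_or_gt.resolve_right fun hgt => ?_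
  have := invCount_lt_mul_swap hpq (w := w * swap p q) (by simpa using hgt)
  rw [mul_assoc, swap_mul_self, mul_one] at this
  omega

/-! ### The tableau criterion -/

def cornerCount (w : Perm (Fin n)) (i m : ℕ) : ℕ :=
  (univ.filter fun x : Fin n => (x : ℕ) < i ∧ (w x : ℕ) < m).card

theorem cornerCount_eq_sum (w : Perm (Fin n)) (i m : ℕ) :
    cornerCount w i m = ∑ x : Fin n, if (x : ℕ) < i ∧ (w x : ℕ) < m then 1 else 0 :=
  card_filter _ _

theorem cornerCount_mul_swap (w : Perm (Fin n)) (p q : Fin n) (i m : ℕ) :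
    cornerCount (w * swap p q) i m + (if (p : ℕ) < i ∧ (w p : ℕ) < m then 1 else 0) +
        (if (q : ℕ) < i ∧ (w q : ℕ) < m then 1 else 0) =
      cornerCount w i m + (if (p : ℕ) < i ∧ (w q : ℕ) < m then 1 else 0) +
        (if (q : ℕ) < i ∧ (w p : ℕ) < m then 1 else 0) := by
  rcases eq_or_ne p q with rfl | hpq
  · simp [swap_self, ← Perm.one_def]
  have hsplit : ∀ v : Perm (Fin n), cornerCount v i m =
      (if (p : ℕ) < i ∧ (v p : ℕ) < m then 1 else 0) +
        ((if (q : ℕ) < i ∧ (v q : ℕ) < m then 1 else 0) +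
          ∑ x ∈ (univ.erase p).erase q, if (x : ℕ) < i ∧ (v x : ℕ) < m then 1 else 0) := by
    intro v
    rw [cornerCount_eq_sum, ← add_sum_erase _ _ (mem_univ p),
      ← add_sum_erase _ _ (mem_erase.2 ⟨hpq.symm, mem_univ q⟩)]
  have hrest : ∑ x ∈ (univ.erase p).erase q,
        (if (x : ℕ) < i ∧ ((w * swap p q) x : ℕ) < m then 1 else 0) =
      ∑ x ∈ (univ.erase p).erase q, if (x : ℕ) < i ∧ (w x : ℕ) < m then 1 else 0 :=
    sum_congr rfl fun x hx => by
      rw [mem_erase, mem_erase] at hx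
      rw [Perm.mul_apply, swap_apply_of_ne_of_ne hx.2.1 hx.1]
  rw [hsplit, hsplit w, hrest]
  simp only [Perm.mul_apply, swap_apply_left, swap_apply_right]
  omega

theorem cornerCount_inv (w : Perm (Fin n)) (i m : ℕ) : cornerCount w⁻¹ m i = cornerCount w i m := by
  rw [cornerCount_eq_sum, cornerCount_eq_sum]
  exact Fintype.sum_equiv w.symm _ _ fun x => by simp [and_comm]

theorem cornerCount_succ_left (w : Perm (Fin n)) (p : Fin n) (m : ℕ) :
    cornerCount w (p + 1) m = cornerCount w p m + if (w p : ℕ) < m then 1 else 0 := by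
  have hp : (if (w p : ℕ) < m then 1 else 0) =
      ∑ x : Fin n, if p = x then (if (w x : ℕ) < m then 1 else 0) else 0 := by simp
  rw [cornerCount_eq_sum, cornerCount_eq_sum, hp, ← sum_add_distrib]
  refine sum_congr rfl fun x _ => ?_
  simp only [Fin.ext_iff]
  split_ifs <;> omega

theorem cornerCount_congr {u v : Perm (Fin n)} {i : ℕ} (h : ∀ x : Fin n, (x : ℕ) < i → u x = v x)
    (m : ℕ) : cornerCount u i m = cornerCount v i m := by
  rw [cornerCount_eq_sum, cornerCount_eq_sum]
  refine sum_congr rfl fun x _ => ?_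
  by_cases hx : (x : ℕ) < i
  · rw [h x hx]
  · simp [hx]

theorem cornerCount_succ_right (w : Perm (Fin n)) (i : ℕ) (c : Fin n) :
    cornerCount w i (c + 1) = cornerCount w i c + if (w⁻¹ c : ℕ) < i then 1 else 0 := by
  rw [← cornerCount_inv, ← cornerCount_inv w, cornerCount_succ_left]

theorem cornerCount_mono_right (w : Perm (Fin n)) (i : ℕ) {m m' : ℕ} (h : m ≤ m') :
    cornerCount w i m ≤ cornerCount w i m' :=
  card_le_card fun x hx => by simp only [mem_filter, mem_univ, true_and] at hx ⊢; omega

theorem cornerCount_of_le_left (w : Perm (Fin n)) {i : ℕ} (hi : n ≤ i) (m : ℕ) :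
    cornerCount w i m = cornerCount (1 : Perm (Fin n)) i m := by
  rw [← cornerCount_inv, ← cornerCount_inv 1]
  simp only [cornerCount]
  congr 1
  ext y
  simp only [mem_filter, mem_univ, true_and]
  have := (w⁻¹ y).isLt
  have := ((1 : Perm (Fin n))⁻¹ y).isLt
  omega

def CornerLE (u v : Perm (Fin n)) : Prop :=
  ∀ i m, cornerCount v i m ≤ cornerCount u i m

theorem cornerLE_mul_swap {w : Perm (Fin n)} {p q : Fin n} (hpq : p < q) (h : w p < w q) :
    CornerLE w (w * swap p q) := by
  intro i m
  have := cornerCount_mul_swap w p q i m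
  split_ifs at this <;> omega

theorem cornerLE_of_step {u v : Perm (Fin n)} (h : Step invCount (swaps n) u v) :
    CornerLE u v := by
  obtain ⟨_, ⟨a, b, hab, rfl⟩, rfl, hlen⟩ := h
  rw [swap_mul_eq_mul_swap] at hlen ⊢
  have hne : u⁻¹ a ≠ u⁻¹ b := u⁻¹.injective.ne hab
  rcases hne.lt_or_gt with hlt | hgt
  · exact cornerLE_mul_swap hlt (lt_of_invCount_lt_mul_swap hlt hlen)
  · rw [swap_comm] at hlen ⊢
    exact cornerLE_mul_swap hgt (lt_of_invCount_lt_mul_swap hgt hlen)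

theorem cornerLE_of_leL_swaps {u v : Perm (Fin n)} (h : leL invCount (swaps n) u v) :
    CornerLE u v := by
  induction h with
  | refl => exact fun _ _ => le_rfl
  | tail _ hstep ih => exact fun i m => (cornerLE_of_step hstep i m).trans (ih i m)

theorem lt_of_cornerLE_of_eqOn {u v : Perm (Fin n)} (hdom : CornerLE u v) {p : Fin n}
    (hagree : ∀ x < p, u x = v x) (hp : u p ≠ v p) : u p < v p := by
  have h := hdom (p + 1) (v p + 1)
  rw [cornerCount_succ_left, cornerCount_succ_left, cornerCount_congr fun x hx => hagree x hx] at h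
  have : (u p : ℕ) ≠ v p := Fin.val_ne_of_ne hp
  split_ifs at h <;> omega

/-- By minimality of `q`, no position in `(p, i)` has its `v`-value in `[u p, m)`. Comparing
position by position, the dots in `[0, i) × [u p, m)` are thus at least one more for `u` (at `p`)
than for `v`; add `hdom i (u p)`. -/
theorem cornerCount_add_one_le {u v : Perm (Fin n)} (hdom : CornerLE u v) {p q : Fin n}
    (hagree : ∀ x < p, u x = v x) (hup : u p ≤ v q)
    (hmin : ∀ x, p < x → u p ≤ v x → v x < v p → q ≤ x) {i m : ℕ} (hpi : (p : ℕ) < i)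
    (hiq : i ≤ q) (hqm : (v q : ℕ) < m) (hmp : m ≤ v p) :
    cornerCount v i m + 1 ≤ cornerCount u i m := by
  have hpointwise : ∑ x : Fin n, ((if (x : ℕ) < i ∧ (v x : ℕ) < m then 1 else 0) +
        (if (x : ℕ) < i ∧ (u x : ℕ) < u p then 1 else 0) + if p = x then 1 else 0) ≤
      ∑ x : Fin n, ((if (x : ℕ) < i ∧ (u x : ℕ) < m then 1 else 0) +
        if (x : ℕ) < i ∧ (v x : ℕ) < u p then 1 else 0) := by
    refine sum_le_sum fun x _ => ?_
    rcases lt_trichotomy x p with hx | rfl | hx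
    · rw [hagree x hx, if_neg hx.ne']
      omega
    · split_ifs <;> omega
    · by_cases hvx : (x : ℕ) < i ∧ u p ≤ v x ∧ (v x : ℕ) < m
      · exact absurd (hmin x hx hvx.2.1 (by omega)) (by omega)
      · split_ifs <;> omega
  simp only [sum_add_distrib, sum_ite_eq, mem_univ, if_true, ← cornerCount_eq_sum] at hpointwise
  have := hdom i (u p)
  omega

theorem cornerLE_mul_swap_of_minimal {u v : Perm (Fin n)} (hdom : CornerLE u v) {p q : Fin n}
    (hagree : ∀ x < p, u x = v x) (hpq : p < q) (hup : u p ≤ v q) (hqp : v q < v p)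
    (hmin : ∀ x, p < x → u p ≤ v x → v x < v p → q ≤ x) : CornerLE u (v * swap p q) := by
  intro i m
  have hswap := cornerCount_mul_swap v p q i m
  have hle := hdom i m
  by_cases hkey : (p : ℕ) < i ∧ i ≤ q ∧ (v q : ℕ) < m ∧ m ≤ v p
  · have := cornerCount_add_one_le hdom hagree hup hmin hkey.1 hkey.2.1 hkey.2.2.1 hkey.2.2.2
    split_ifs at hswap <;> omega
  · split_ifs at hswap <;> omega

theorem exists_step_cornerLE {u v : Perm (Fin n)} (hne : u ≠ v) (hdom : CornerLE u v) :
    ∃ v', Step invCount (swaps n) v' v ∧ CornerLE u v' := by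
  obtain ⟨x₀, hx₀⟩ : ∃ x, u x ≠ v x := by
    by_contra! h
    exact hne (Equiv.ext h)
  obtain ⟨p, hp, hpmin⟩ := wellFounded_lt.has_min {x | u x ≠ v x} ⟨x₀, hx₀⟩
  have hagree : ∀ x < p, u x = v x := fun x hx => not_not.1 fun h => hpmin x h hx
  have hlt := lt_of_cornerLE_of_eqOn hdom hagree hp
  have hv : v (v⁻¹ (u p)) = u p := by simp
  have hpv : p < v⁻¹ (u p) := by
    rcases lt_trichotomy (v⁻¹ (u p)) p with h | h | h
    · have := hagree _ h
      rw [hv] at this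
      exact absurd (u.injective this) h.ne
    · rw [h] at hv
      exact absurd hv.symm hp
    · exact h
  obtain ⟨q, ⟨hpq, hup, hqp⟩, hqmin⟩ :=
    wellFounded_lt.has_min {x | p < x ∧ u p ≤ v x ∧ v x < v p} ⟨_, hpv, hv.ge, hv.symm ▸ hlt⟩
  refine ⟨v * swap p q, ⟨swap (v q) (v p), ⟨_, _, hqp.ne, rfl⟩, ?_, ?_⟩,
    cornerLE_mul_swap_of_minimal hdom hagree hpq hup hqp fun x h₁ h₂ h₃ =>
      not_lt.1 (hqmin x ⟨h₁, h₂, h₃⟩)⟩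
  · rw [mul_swap_eq_swap_mul, swap_comm, ← mul_assoc, swap_mul_self, one_mul]
  · have := invCount_lt_mul_swap hpq (w := v * swap p q) (by simpa using hqp)
    rwa [mul_assoc, swap_mul_self, mul_one] at this

theorem leL_swaps_of_cornerLE {u v : Perm (Fin n)} (h : CornerLE u v) :
    leL invCount (swaps n) u v := by
  induction hN : invCount v using Nat.strong_induction_on generalizing v with
  | _ N ih =>
    by_cases huv : u = v
    · exact huv ▸ Relation.ReflTransGen.refl
    obtain ⟨v', hstep, hdom'⟩ := exists_step_cornerLE huv h
    have hlen : invCount v' < invCount v := by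
      obtain ⟨_, _, _, hlen⟩ := hstep
      exact hlen
    exact .tail (ih _ (hN ▸ hlen) hdom' rfl) hstep

theorem leL_swaps_iff_cornerLE {u v : Perm (Fin n)} :
    leL invCount (swaps n) u v ↔ CornerLE u v :=
  ⟨cornerLE_of_leL_swaps, leL_swaps_of_cornerLE⟩

theorem cornerLE_of_forall_pos_lt {u v : Perm (Fin n)}
    (h : ∀ i, 0 < i → i < n → ∀ m, cornerCount v i m ≤ cornerCount u i m) : CornerLE u v := by
  intro i m
  rcases Nat.eq_zero_or_pos i with rfl | hi
  · simp [cornerCount]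
  rcases lt_or_ge i n with hin | hin
  · exact h i hi hin m
  · rw [cornerCount_of_le_left v hin, cornerCount_of_le_left u hin]

/-! ### Parabolic factorization and Grassmannian permutations -/

section Parabolic

open MulAction
open scoped Pointwise

theorem mem_simples_diff_iff {a b c d : Fin n} (hab : (a : ℕ) + 1 = b) (hcd : (c : ℕ) + 1 = d) :
    swap c d ∈ simples n \ {swap a b} ↔ c ≠ a := by
  refine ⟨?_, fun hca => ⟨⟨c, d, hcd, rfl⟩, fun h => hca ?_⟩⟩
  · rintro ⟨-, hne⟩ rfl
    obtain rfl : d = b := Fin.ext (by omega)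
    exact hne rfl
  · have h₁ : swap a b c = d := by rw [← Set.mem_singleton_iff.1 h, swap_apply_left]
    simp only [swap_apply_def, Fin.ext_iff] at h₁ ⊢
    split_ifs at h₁ <;> omega

theorem closure_simples_diff_le_stabilizer {a b : Fin n} (hab : (a : ℕ) + 1 = b) :
    Subgroup.closure (simples n \ {swap a b}) ≤
      stabilizer (Perm (Fin n)) {x : Fin n | (x : ℕ) < b} := by
  refine Subgroup.closure_le _ |>.2 ?_
  rintro _ ⟨⟨c, d, hcd, rfl⟩, hne⟩
  have hca : c ≠ a := (mem_simples_diff_iff hab hcd).1 ⟨⟨c, d, hcd, rfl⟩, hne⟩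
  rw [SetLike.mem_coe, mem_stabilizer_set]
  intro x
  simp only [Perm.smul_def, Set.mem_ofPred_eq, swap_apply_def]
  rw [Ne, Fin.ext_iff] at hca
  split_ifs <;> omega

theorem cornerCount_mul_of_mem_stabilizer (w : Perm (Fin n)) {i : ℕ} {z : Perm (Fin n)}
    (hz : z ∈ stabilizer (Perm (Fin n)) {x : Fin n | (x : ℕ) < i}) (m : ℕ) :
    cornerCount (w * z) i m = cornerCount w i m := by
  simp only [mem_stabilizer_set, Perm.smul_def, Set.mem_ofPred_eq] at hz
  rw [cornerCount_eq_sum, cornerCount_eq_sum]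
  exact Fintype.sum_equiv z _ _ fun x => if_congr (by simp [hz]) rfl rfl

theorem strictMonoOn_of_lt_adjacent {α : Type*} [Preorder α] {f : Fin n → α}
    {s : Set (Fin n)} (hs : s.OrdConnected)
    (h : ∀ c d : Fin n, (c : ℕ) + 1 = d → c ∈ s → d ∈ s → f c < f d) : StrictMonoOn f s :=
  strictMonoOn_of_lt_succ hs fun _ ha has hsa =>
    h _ _ (Order.covBy_iff_add_one_eq.1 (Fin.covBy_iff.1 (Order.covBy_succ_of_not_isMax ha)))
      has hsa

def IsGrassmannian (b : ℕ) (w : Perm (Fin n)) : Prop :=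
  StrictMonoOn w {x | (x : ℕ) < b} ∧ StrictMonoOn w {x | b ≤ (x : ℕ)}

theorem isGrassmannian_of_lt_adjacent {b : ℕ} {w : Perm (Fin n)}
    (h : ∀ c d : Fin n, (c : ℕ) + 1 = d → (d : ℕ) ≠ b → w c < w d) : IsGrassmannian b w :=
  ⟨strictMonoOn_of_lt_adjacent ⟨fun _ _ _ hy _ hz => Nat.lt_of_le_of_lt hz.2 hy⟩
      fun c d hcd _ hd => h c d hcd (by simp at hd; omega),
    strictMonoOn_of_lt_adjacent ⟨fun _ hx _ _ _ hz => Nat.le_trans hx hz.1⟩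
      fun c d hcd hc _ => h c d hcd (by simp at hc; omega)⟩

namespace IsGrassmannian

variable {b : ℕ} {w : Perm (Fin n)} {x y : Fin n}

theorem apply_lt_apply (hw : IsGrassmannian b w) (hxy : (x : ℕ) < b ↔ (y : ℕ) < b)
    (h : x < y) : w x < w y := by
  by_cases hx : (x : ℕ) < b
  · exact hw.1 hx (hxy.1 hx) h
  · exact hw.2 (not_lt.1 hx) (not_lt.1 (hxy.not.1 hx)) h

theorem lt_of_apply_lt (hw : IsGrassmannian b w) (hxy : (x : ℕ) < b ↔ (y : ℕ) < b)
    (h : w x < w y) : x < y := by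
  rcases lt_trichotomy x y with hlt | rfl | hgt
  · exact hlt
  · exact absurd h (lt_irrefl _)
  · exact absurd (hw.apply_lt_apply hxy.symm hgt) (lt_asymm h)

end IsGrassmannian

theorem eq_one_of_strictMono {σ : Perm (Fin n)} (h : StrictMono σ) : σ = 1 := by
  have := Subsingleton.elim (h.orderIsoOfSurjective σ σ.surjective) (OrderIso.refl _)
  ext x
  exact congrArg (fun e : Fin n ≃o Fin n => (e x : ℕ)) this

namespace IsGrassmannian

variable {b : ℕ} {x y : Perm (Fin n)}

theorem eq_of_cornerCount_eq (hx : IsGrassmannian b x) (hy : IsGrassmannian b y)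
    (h : ∀ m, cornerCount x b m = cornerCount y b m) : x = y := by
  have hblock : ∀ c : Fin n, ((x⁻¹ c : ℕ) < b ↔ (y⁻¹ c : ℕ) < b) := by
    intro c
    have := h (c + 1)
    rw [cornerCount_succ_right, cornerCount_succ_right, h c] at this
    split_ifs at this <;> simp_all; omega
  have hmono : StrictMono (x⁻¹ * y) := by
    intro t t' htt'
    simp only [Perm.mul_apply]
    by_cases hsame : ((t : ℕ) < b ↔ (t' : ℕ) < b)
    · refine hx.lt_of_apply_lt ?_ (by simpa using hy.apply_lt_apply hsame htt')
      rw [hblock, hblock]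
      simpa using hsame
    · have ht := (hblock (y t)).2 (by simp; omega)
      have ht' := (hblock (y t')).not.2 (by simp; omega)
      exact Fin.lt_def.2 (by omega)
  exact inv_mul_eq_one.1 (eq_one_of_strictMono hmono)

theorem swap_mul (hx : IsGrassmannian b x) {a a' : Fin n} (haa' : (a : ℕ) + 1 = a')
    (ha : (x⁻¹ a : ℕ) < b) (ha' : b ≤ (x⁻¹ a' : ℕ)) : IsGrassmannian b (swap a a' * x) := by
  have key : ∀ t t', x t < x t' → ¬(x t = a ∧ x t' = a') → (swap a a' * x) t < (swap a a' * x) t' :=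
    fun t t' hlt hne => (swap_lt_swap_iff haa' hne fun h => by
      rw [h.1, h.2, Fin.lt_def] at hlt; omega).2 hlt
  refine ⟨fun t ht t' ht' htt' => key t t' (hx.1 ht ht' htt') fun h => ?_,
    fun t ht t' ht' htt' => key t t' (hx.2 ht ht' htt') fun h => ?_⟩
  · simp [← h.2] at ha'
    exact absurd ht' (by simp; omega)
  · simp [← h.1] at ha
    exact absurd ht (by simp; omega)

end IsGrassmannian

namespace PFactor

variable {a b : Fin n} {w wup wJ : Perm (Fin n)}

theorem isGrassmannian (hab : (a : ℕ) + 1 = b)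
    (h : PFactor invCount (simples n \ {swap a b}) w wup wJ) : IsGrassmannian b wup :=
  isGrassmannian_of_lt_adjacent fun c d hcd hdb =>
    lt_of_invCount_lt_mul_swap (Fin.lt_def.2 (by omega))
      (h.2.1 _ ((mem_simples_diff_iff hab hcd).2 fun hca => hdb (by rw [← hcd, hca, hab])))

theorem cornerCount_eq (hab : (a : ℕ) + 1 = b)
    (h : PFactor invCount (simples n \ {swap a b}) w wup wJ) (m : ℕ) :
    cornerCount w b m = cornerCount wup b m := by
  rw [h.2.2.1]
  exact cornerCount_mul_of_mem_stabilizer _ (closure_simples_diff_le_stabilizer hab h.1) m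

end PFactor

theorem exists_pFactor {a b : Fin n} (hab : (a : ℕ) + 1 = b) (w : Perm (Fin n)) :
    ∃ wup wJ, PFactor invCount (simples n \ {swap a b}) w wup wJ := by
  induction hN : invCount w using Nat.strong_induction_on generalizing w with
  | _ N ih =>
  by_cases hmin : ∀ s ∈ simples n \ {swap a b}, invCount w < invCount (w * s)
  · exact ⟨w, 1, Subgroup.one_mem _, hmin, (mul_one w).symm, by rw [invCount_one, add_zero]⟩
  push Not at hmin
  obtain ⟨_, hJ, hdesc⟩ := hmin
  obtain ⟨⟨c, d, hcd, rfl⟩, -⟩ := id hJ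
  have hcd' : c < d := Fin.lt_def.2 (by omega)
  have hgt : w d < w c := (w.injective.ne hcd'.ne).lt_or_gt.resolve_left fun hlt => by
    rw [invCount_mul_swap_of_lt hcd hlt] at hdesc
    omega
  have hlen := invCount_mul_swap_of_gt hcd hgt
  obtain ⟨wup, wJ, hwJ, hasc, hfac, hadd⟩ := ih _ (by omega) (w * swap c d) rfl
  have hblock : ((wJ c : ℕ) < b ↔ (wJ d : ℕ) < b) := by
    have hstab := closure_simples_diff_le_stabilizer hab hwJ
    simp only [MulAction.mem_stabilizer_set, Perm.smul_def, Set.mem_ofPred_eq] at hstab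
    rw [hstab, hstab]
    have := (mem_simples_diff_iff hab hcd).1 hJ
    rw [Ne, Fin.ext_iff] at this
    omega
  have hwJcd : wJ c < wJ d := (PFactor.isGrassmannian hab ⟨hwJ, hasc, hfac, hadd⟩).lt_of_apply_lt
    hblock (by simpa [← Perm.mul_apply, ← hfac] using hgt)
  refine ⟨wup, wJ * swap c d, Subgroup.mul_mem _ hwJ (Subgroup.subset_closure hJ), hasc, ?_, ?_⟩
  · rw [← mul_assoc, ← hfac, mul_assoc, swap_mul_self, mul_one]
  · rw [invCount_mul_swap_of_lt hcd hwJcd]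
    omega

theorem cornerCount_swap_mul_add {x : Perm (Fin n)} {b : ℕ} {a a' : Fin n}
    (haa' : (a : ℕ) + 1 = a') (ha : (x⁻¹ a : ℕ) < b) (ha' : b ≤ (x⁻¹ a' : ℕ)) (m : ℕ) :
    cornerCount (swap a a' * x) b m + (if m = a' then 1 else 0) = cornerCount x b m := by
  have := cornerCount_mul_swap x⁻¹ a a' m b
  rw [← cornerCount_inv (swap a a' * x), mul_inv_rev, swap_inv, ← cornerCount_inv x]
  split_ifs at this ⊢ <;> omega

theorem exists_cornerCount_succ_lt {x y : Perm (Fin n)} {b m₀ : ℕ}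
    (hlt : cornerCount y b m₀ < cornerCount x b m₀) :
    ∃ c : Fin n, (x⁻¹ c : ℕ) < b ∧ cornerCount y b (c + 1) < cornerCount x b (c + 1) := by
  set S := univ.filter fun c : Fin n => (x⁻¹ c : ℕ) < b ∧ (c : ℕ) < m₀
  have hmem : ∀ c, c ∈ S ↔ (x⁻¹ c : ℕ) < b ∧ (c : ℕ) < m₀ := by simp [S]
  have hS : S.Nonempty := by
    obtain ⟨t, ht⟩ := card_pos.1 (Nat.zero_lt_of_lt hlt)
    simp only [mem_filter, mem_univ, true_and] at ht
    exact ⟨x t, (hmem _).2 (by simpa using ht)⟩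
  set c₀ := S.max' hS
  obtain ⟨hc, hcm⟩ := (hmem c₀).1 (S.max'_mem hS)
  refine ⟨c₀, hc, ?_⟩
  have hx : cornerCount x b m₀ = cornerCount x b (c₀ + 1) := by
    rw [← cornerCount_inv, ← cornerCount_inv x]
    simp only [cornerCount]
    congr 1
    ext c
    have := fun h₁ h₂ => S.le_max' c ((hmem c).2 ⟨h₁, h₂⟩)
    simp only [mem_filter, mem_univ, true_and]
    constructor
    · exact fun h => ⟨Nat.lt_succ_of_le (this h.2 h.1), h.2⟩
    · exact fun h => ⟨by omega, h.2⟩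
  have := cornerCount_mono_right y b (show (c₀ : ℕ) + 1 ≤ m₀ by omega)
  omega

/-- `a` is the largest value in the first block of `x` with a surplus at `a + 1`; maximality puts
`a + 1` in the second block. -/
theorem exists_swap_of_cornerCount_lt {x y : Perm (Fin n)} {b m₀ : ℕ}
    (hlt : cornerCount y b m₀ < cornerCount x b m₀) :
    ∃ a a' : Fin n, (a : ℕ) + 1 = a' ∧ (x⁻¹ a : ℕ) < b ∧ b ≤ (x⁻¹ a' : ℕ) ∧
      cornerCount y b a' < cornerCount x b a' := by
  set T := univ.filter fun c : Fin n =>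
    (x⁻¹ c : ℕ) < b ∧ cornerCount y b (c + 1) < cornerCount x b (c + 1)
  have hmem : ∀ c, c ∈ T ↔ (x⁻¹ c : ℕ) < b ∧ cornerCount y b (c + 1) < cornerCount x b (c + 1) :=
    by simp [T]
  obtain ⟨c, hc⟩ := exists_cornerCount_succ_lt hlt
  have hT : T.Nonempty := ⟨c, (hmem c).2 hc⟩
  set a := T.max' hT
  obtain ⟨ha, hlta⟩ := (hmem a).1 (T.max'_mem hT)
  have han : (a : ℕ) + 1 < n := by
    by_contra! h
    have hx := cornerCount_of_le_left x⁻¹ h b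
    have hy := cornerCount_of_le_left y⁻¹ h b
    rw [cornerCount_inv] at hx hy
    omega
  refine ⟨a, ⟨a + 1, han⟩, rfl, ha, not_lt.1 fun hb => ?_, hlta⟩
  have hx := cornerCount_succ_right x b ⟨a + 1, han⟩
  have hy := cornerCount_succ_right y b ⟨a + 1, han⟩
  rw [if_pos hb] at hx
  simp only at hx hy
  have := T.le_max' _ ((hmem _).2 ⟨hb, by simp only; split_ifs at hy <;> omega⟩)
  exact absurd this (not_le.2 (Fin.lt_def.2 (by simp [a])))

theorem leL_swapsK_of_cornerCount_le (k : ℕ) {b : ℕ} {x y : Perm (Fin n)}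
    (hx : IsGrassmannian b x) (hy : IsGrassmannian b y)
    (hle : ∀ m, cornerCount y b m ≤ cornerCount x b m) : leL invCount (swapsK n k) x y := by
  induction hN : ∑ m ∈ range (n + 1), cornerCount x b m using Nat.strong_induction_on
    generalizing x with
  | _ N ih =>
  by_cases heq : ∀ m, cornerCount x b m = cornerCount y b m
  · exact hx.eq_of_cornerCount_eq hy heq ▸ .refl
  push Not at heq
  obtain ⟨m₀, hm₀⟩ := heq
  obtain ⟨a, a', haa', ha, ha', hlt⟩ :=
    exists_swap_of_cornerCount_lt (lt_of_le_of_ne (hle m₀) (Ne.symm hm₀))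
  have hcount := cornerCount_swap_mul_add haa' ha ha'
  have hstep : Step invCount (swapsK n k) x (swap a a' * x) := by
    refine ⟨swap a a', ⟨⟨a, a', fun h => by simp [h] at haa', rfl⟩, ?_⟩, rfl, ?_⟩
    · rw [invCount_swap haa']
      omega
    · rw [swap_mul_eq_mul_swap]
      exact invCount_lt_mul_swap (Fin.lt_def.2 (by omega))
        (by simpa using Fin.lt_def.2 (by omega : (a : ℕ) < a'))
  refine .head hstep (ih _ ?_ (hx.swap_mul haa' ha ha') (fun m => ?_) rfl)
  · have hsum := sum_congr rfl fun m (_ : m ∈ range (n + 1)) => hcount m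
    rw [sum_add_distrib, sum_ite_eq', if_pos (mem_range.2 (by omega))] at hsum
    rw [← hN, ← hsum]
    omega
  · have := hcount m
    have := hle m
    split_ifs at * with hm
    · subst hm; omega
    · omega

end Parabolic

end KBruhatPaper

theorem stmt_10_general (n : ℕ) (k : ℕ) (u v : Equiv.Perm (Fin n)) :
    leL invCount (swaps n) u v ↔
      ∀ s ∈ simples n, ∀ uup uJ vup vJ : Equiv.Perm (Fin n),
        PFactor invCount (simples n \ {s}) u uup uJ →
        PFactor invCount (simples n \ {s}) v vup vJ →
        leL invCount (swapsK n k) uup vup := by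
  constructor
  · rintro h _ ⟨a, b, hab, rfl⟩ uup uJ vup vJ hu hv
    refine leL_swapsK_of_cornerCount_le k (hu.isGrassmannian hab) (hv.isGrassmannian hab)
      fun m => ?_
    rw [← hu.cornerCount_eq hab, ← hv.cornerCount_eq hab]
    exact leL_swaps_iff_cornerLE.1 h b m
  · intro H
    refine leL_swaps_iff_cornerLE.2 <| cornerLE_of_forall_pos_lt fun i hi hin m => ?_
    obtain ⟨b, rfl⟩ : ∃ b : Fin n, (b : ℕ) = i := ⟨⟨i, hin⟩, rfl⟩
    have hab : ((⟨b - 1, by omega⟩ : Fin n) : ℕ) + 1 = b := by simp only; omega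
    obtain ⟨uup, uJ, hu⟩ := exists_pFactor hab u
    obtain ⟨vup, vJ, hv⟩ := exists_pFactor hab v
    rw [hu.cornerCount_eq hab, hv.cornerCount_eq hab]
    exact leL_swaps_iff_cornerLE.1
      (leL_mono (fun _ h => h.1) (H _ ⟨_, b, hab, rfl⟩ _ _ _ _ hu hv)) b m

/-- in the symmetric group `S_n`, `u ≤ v` in the Bruhat order iff
`P^{S∖{s}}(u) ≤_{L^k} P^{S∖{s}}(v)` for every simple reflection `s`; consequently
`w ↦ (P^{S∖{s_1}}(w), …, P^{S∖{s_{n-1}}}(w))` identifies `(S_n, ≤)` with the image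
of `φ_k` in the product of the posets `(S_n^{S∖{s_i}}, ≤_{L^k})`. -/
theorem stmt_10 (n : ℕ) (hn : 2 ≤ n) (k : ℕ) (u v : Equiv.Perm (Fin n)) :
    leL invCount (swaps n) u v ↔
      ∀ s ∈ simples n, ∀ uup uJ vup vJ : Equiv.Perm (Fin n),
        PFactor invCount (simples n \ {s}) u uup uJ →
        PFactor invCount (simples n \ {s}) v vup vJ →
        leL invCount (swapsK n k) uup vup :=
  stmt_10_general n k u v
end

section
/- Let (W,S) be a dihedral Coxeter system (|S| = 2), x ∈ W and t ∈ T with ℓ(t x) > ℓ(x) + 1. Then there exist t_1, …, t_n ∈ T with ℓ(t_i) < ℓ(t) for all i ∈ {1, …, n} and ℓ(x) < ℓ(t_1 x) < ℓ(t_2 t_1 x) < ⋯ < ℓ(t_n ⋯ t_1 x), with t_n ⋯ t_1 x = t x. -/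
open KBruhatPaper

/-!
In a dihedral Coxeter group, with `m` the order of `s₀ s₁` (`m = 0` meaning infinite order),
every element `w` is the product of an alternating word of length `ℓ w`, and the Cayley graph is
a cycle of length `2m` (a line if `m = 0`). Reading off the position on this cycle shows that an
alternating word of length `n` has length `n` when `n ≤ m` and `2m - n` when `m ≤ n ≤ 2m`.

Write `t x` and `x` as alternating words of lengths `L ≥ a + 2` and `a = ℓ x`. If both words end
with the same letter, `x` is a suffix of the word of `t x`, and simple reflections climb from `x`
to `t x`. Otherwise `t` is an alternating word of length `L + a`. If `ℓ t > 2a + 1`, a reflection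
of length at most `2a + 1` jumps from `x` to the suffix of length `a + 1` of the word of `t x`,
and simple reflections climb the rest. If not, then `m < L + a` and `ℓ t = 2m - L - a`; one climbs
the word of `x` by simple reflections up to length `L - 1` and jumps to `t x` with a reflection
of length `2m - 2L + 1 < ℓ t`.
-/

open CoxeterSystem List

lemma fin_two_add_one_add_one (f : Fin 2) : f + 1 + 1 = f := by
  fin_cases f <;> rfl

lemma fin_two_eq_or_eq_add_one (j f : Fin 2) : j = f ∨ j = f + 1 := by
  fin_cases j <;> fin_cases f <;> decide

lemma ZMod.natAbs_valMinAbs_sub_le {n : ℕ} (a b : ZMod n) :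
    (a - b).valMinAbs.natAbs ≤ a.valMinAbs.natAbs + b.valMinAbs.natAbs := by
  rw [sub_eq_add_neg, ← natAbs_valMinAbs_neg b]
  exact (natAbs_valMinAbs_add_le a (-b)).trans (Int.natAbs_add_le _ _)

lemma ZMod.natAbs_valMinAbs_one_le (n : ℕ) : (1 : ZMod n).valMinAbs.natAbs ≤ 1 := by
  rcases n with _ | _ | n
  · simp
  · simp [Subsingleton.elim (1 : ZMod 1) 0]
  · have h := valMinAbs_natCast_of_le_half (n := n + 2) (a := 1) (by omega)
    rw [Nat.cast_one] at h
    simp [h]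

lemma ZMod.natAbs_valMinAbs_natCast {N n : ℕ} (h : 2 * n ≤ N ∨ N = 0) :
    (n : ZMod N).valMinAbs.natAbs = n := by
  rcases N with _ | N
  · exact Int.natAbs_natCast n
  · rw [valMinAbs_natCast_of_le_half (by omega)]
    simp

lemma Equiv.subLeft_mul_subLeft_pow_apply {G : Type*} [AddCommGroup G] (a b x : G) (k : ℕ) :
    ((Equiv.subLeft a * Equiv.subLeft b) ^ k) x = x + k • (a - b) := by
  induction k with
  | zero => simp
  | succ k ih =>
    rw [pow_succ', Perm.mul_apply, ih]
    simp only [Perm.mul_apply, Equiv.subLeft_apply, succ_nsmul]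
    abel

theorem Relation.TransGen.exists_seq {α : Type*} {r : α → α → Prop} {a b : α}
    (h : Relation.TransGen r a b) :
    ∃ (n : ℕ) (y : ℕ → α), 0 < n ∧ y 0 = a ∧ y n = b ∧ ∀ i < n, r (y i) (y (i + 1)) := by
  induction h with
  | single hab => exact ⟨1, fun i => if i = 0 then a else _, one_pos, rfl, rfl, by simpa⟩
  | @tail b c _ hbc ih =>
    obtain ⟨n, y, hn, hy0, hyn, hy⟩ := ih
    refine ⟨n + 1, fun i => if i ≤ n then y i else c, n.succ_pos, by simpa, by simp, ?_⟩
    intro i hi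
    rcases Nat.lt_succ_iff_lt_or_eq.mp hi with hi | rfl
    · simpa [hi.le, Nat.succ_le_of_lt hi] using hy i hi
    · simpa [hyn] using hbc

lemma KBruhatPaper.Step.of_mul_inv_mem {W : Type*} [Group W] {len : W → ℕ} {X : Set W}
    {u v : W} (hX : v * u⁻¹ ∈ X) (hlen : len u < len v) : Step len X u v :=
  ⟨v * u⁻¹, hX, (inv_mul_cancel_right v u).symm, hlen⟩

namespace CoxeterMatrix

variable (M : CoxeterMatrix (Fin 2))

lemma fin_two_apply_add_one (f : Fin 2) : M f (f + 1) = M 0 1 := by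
  fin_cases f
  · rfl
  · exact M.symmetric 1 0

lemma fin_two_apply_add_one_left (f : Fin 2) : M (f + 1) f = M 0 1 := by
  rw [M.symmetric, M.fin_two_apply_add_one]

lemma isLiftable_subLeft :
    M.IsLiftable fun k : Fin 2 => Equiv.subLeft (![1, -1] k : ZMod (2 * M 0 1)) := by
  intro i j
  ext x
  rw [Equiv.subLeft_mul_subLeft_pow_apply, Equiv.Perm.one_apply, add_eq_left]
  have h : (M 0 1 : ZMod (2 * M 0 1)) * 2 = 0 := by
    rw [mul_comm]; exact_mod_cast ZMod.natCast_self _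
  fin_cases i <;> fin_cases j <;> simp [M.symmetric 1 0]
  · linear_combination h
  · linear_combination -h

end CoxeterMatrix

namespace CoxeterSystem

theorem isReflection_wordProd_alternatingWord_odd {B W : Type*} [Group W] {M : CoxeterMatrix B}
    (cs : CoxeterSystem M W) (i j : B) (k : ℕ) :
    cs.IsReflection (cs.wordProd (alternatingWord i j (2 * k + 1))) := by
  apply cs.isReflection_of_mem_leftInvSeq (alternatingWord j i (2 * (k + 1)))
  rw [← cs.getElem_leftInvSeq_alternatingWord j i (k + 1) k (by omega)]
  exact List.getElem_mem _

variable {W : Type*} [Group W] {M : CoxeterMatrix (Fin 2)} (cs : CoxeterSystem M W)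

local prefix:100 "π" => cs.wordProd
local prefix:100 "ℓ" => cs.length

theorem eq_alternatingWord_of_isReduced {ω : List (Fin 2)} (hω : cs.IsReduced ω) :
    ∃ f : Fin 2, ω = alternatingWord (f + 1) f ω.length := by
  induction ω using List.reverseRecOn with
  | nil => exact ⟨0, rfl⟩
  | append_singleton ω j ih =>
    obtain ⟨f, hf⟩ := ih (by simpa using hω.take ω.length)
    rcases hn : ω.length with _ | k
    · exact ⟨j, by simp [List.length_eq_zero_iff.mp hn, alternatingWord]⟩
    rw [hn, alternatingWord_succ] at hf
    rcases fin_two_eq_or_eq_add_one j f with rfl | rfl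
    · have hlen : ℓ (π (ω ++ [j])) ≤ k := by
        rw [hf, concat_eq_append, wordProd_append, wordProd_append, wordProd_singleton,
          mul_assoc, simple_mul_simple_self, mul_one]
        exact (cs.length_wordProd_le _).trans (length_alternatingWord _ _ _).le
      have := hω.eq
      simp only [length_append, hn, length_singleton] at this
      omega
    · refine ⟨f + 1, ?_⟩
      rw [fin_two_add_one_add_one, length_append, hn, hf, length_singleton,
        alternatingWord_succ _ _ (k + 1), alternatingWord_succ]
      simp only [concat_eq_append]

theorem exists_eq_wordProd_alternatingWord (w : W) :
    ∃ f : Fin 2, w = π (alternatingWord (f + 1) f (ℓ w)) := by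
  obtain ⟨ω, hω, rfl⟩ := cs.exists_isReduced w
  obtain ⟨f, hf⟩ := cs.eq_alternatingWord_of_isReduced hω
  exact ⟨f, by rw [hω.eq]; exact congrArg _ hf⟩

theorem exists_wordProd_alternatingWord_mul_inv (f : Fin 2) (m n : ℕ) :
    ∃ g : Fin 2, π (alternatingWord (f + 1) f m) * (π (alternatingWord f (f + 1) n))⁻¹ =
      π (alternatingWord (g + 1) g (m + n)) := by
  induction n generalizing f m with
  | zero => exact ⟨f, by simp [alternatingWord]⟩
  | succ n ih =>
    obtain ⟨g, hg⟩ := ih (f + 1) (m + 1)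
    refine ⟨g, ?_⟩
    rw [fin_two_add_one_add_one, alternatingWord_succ, wordProd_concat] at hg
    rw [← add_assoc, add_right_comm, ← hg, alternatingWord_succ, wordProd_concat, mul_inv_rev,
      inv_simple, mul_assoc]

/-- A model of the Cayley graph of `W`: the cycle `ZMod (2 * M 0 1)` (a line if `M 0 1 = 0`),
on which the two simple reflections act as `x ↦ 1 - x` and `x ↦ -1 - x`. -/
def cycleAction : W →* Equiv.Perm (ZMod (2 * M 0 1)) :=
  cs.lift ⟨_, M.isLiftable_subLeft⟩

-- Taking `w⁻¹` makes appending a letter to a word act on the coordinate.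
def cycleCoord (w : W) : ZMod (2 * M 0 1) :=
  cs.cycleAction w⁻¹ 0

theorem cycleCoord_mul_simple (w : W) (k : Fin 2) :
    cs.cycleCoord (w * cs.simple k) = ![1, -1] k - cs.cycleCoord w := by
  simp [cycleCoord, cycleAction, cs.lift_apply_simple M.isLiftable_subLeft]

theorem natAbs_valMinAbs_cycleCoord_le (w : W) :
    (cs.cycleCoord w).valMinAbs.natAbs ≤ ℓ w := by
  obtain ⟨ω, hω, rfl⟩ := cs.exists_isReduced w
  rw [hω.eq]
  clear hω
  induction ω using List.reverseRecOn with
  | nil => simp [cycleCoord]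
  | append_singleton ω k ih =>
    rw [wordProd_append, wordProd_singleton, cycleCoord_mul_simple, length_append,
      length_singleton]
    have hk : (![1, -1] k : ZMod (2 * M 0 1)).valMinAbs.natAbs ≤ 1 := by
      fin_cases k <;> simp [ZMod.natAbs_valMinAbs_neg, ZMod.natAbs_valMinAbs_one_le]
    have := ZMod.natAbs_valMinAbs_sub_le (![1, -1] k) (cs.cycleCoord (π ω))
    omega

theorem cycleCoord_alternatingWord (f : Fin 2) (n : ℕ) :
    cs.cycleCoord (π (alternatingWord (f + 1) f n)) = n * ![1, -1] f := by
  induction n generalizing f with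
  | zero => simp [alternatingWord, cycleCoord]
  | succ n ih =>
    have h := ih (f + 1)
    rw [fin_two_add_one_add_one] at h
    rw [alternatingWord_succ, wordProd_concat, cycleCoord_mul_simple, h]
    fin_cases f <;> simp <;> ring

theorem length_wordProd_alternatingWord {f : Fin 2} {n : ℕ} (hn : n ≤ M 0 1 ∨ M 0 1 = 0) :
    ℓ (π (alternatingWord (f + 1) f n)) = n := by
  refine le_antisymm ((cs.length_wordProd_le _).trans (length_alternatingWord _ _ _).le) ?_
  have h := cs.natAbs_valMinAbs_cycleCoord_le (π (alternatingWord (f + 1) f n))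
  have hcast := ZMod.natAbs_valMinAbs_natCast (N := 2 * M 0 1) (n := n) (by omega)
  rw [cycleCoord_alternatingWord] at h
  fin_cases f <;> simp_all [ZMod.natAbs_valMinAbs_neg]

theorem length_wordProd_alternatingWord_of_le_of_le {f : Fin 2} {n : ℕ} (h₁ : M 0 1 ≤ n)
    (h₂ : n ≤ 2 * M 0 1) : ℓ (π (alternatingWord (f + 1) f n)) = 2 * M 0 1 - n := by
  have h := cs.length_wordProd_alternatingWord (f := f + 1) (n := 2 * M 0 1 - n) (by omega)
  rw [cs.prod_alternatingWord_eq_prod_alternatingWord_sub (f + 1) f n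
    (by rw [M.fin_two_apply_add_one_left]; omega), M.fin_two_apply_add_one_left, mul_comm]
  rwa [fin_two_add_one_add_one] at h

theorem le_of_isReduced_alternatingWord {f : Fin 2} {n : ℕ}
    (h : cs.IsReduced (alternatingWord (f + 1) f n)) : n ≤ M 0 1 ∨ M 0 1 = 0 := by
  by_contra! hn
  exact cs.not_isReduced_alternatingWord (f + 1) f
    (by rw [M.fin_two_apply_add_one_left]; exact hn.2)
    (by rw [M.fin_two_apply_add_one_left]; exact hn.1) h

section Chains

open Relation

theorem step_alternatingWord_succ {X : Set W} (hX : ∀ k, cs.simple k ∈ X) (f : Fin 2) {k : ℕ}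
    (hk : k + 1 ≤ M 0 1 ∨ M 0 1 = 0) :
    Step cs.length X (π (alternatingWord (f + 1) f k)) (π (alternatingWord (f + 1) f (k + 1))) :=
  ⟨_, hX _, by rw [alternatingWord_succ', wordProd_cons], by
    rw [cs.length_wordProd_alternatingWord (by omega), cs.length_wordProd_alternatingWord hk]
    exact k.lt_succ_self⟩

theorem transGen_step_alternatingWord {X : Set W} (hX : ∀ k, cs.simple k ∈ X) (f : Fin 2)
    {j k : ℕ} (hjk : j < k) (hk : k ≤ M 0 1 ∨ M 0 1 = 0) :
    TransGen (Step cs.length X) (π (alternatingWord (f + 1) f j))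
      (π (alternatingWord (f + 1) f k)) := by
  induction k, hjk using Nat.le_induction with
  | base => exact .single (cs.step_alternatingWord_succ hX f hk)
  | succ k hjk ih => exact .tail (ih (by omega)) (cs.step_alternatingWord_succ hX f hk)

theorem transGen_step_of_opposite_alternatingWords_of_lt {x t : W} {e : Fin 2} {a L : ℕ}
    (hX : ∀ k, cs.simple k ∈ {r | cs.IsReflection r ∧ ℓ r < ℓ t})
    (hx : x = π (alternatingWord e (e + 1) a)) (htx : t * x = π (alternatingWord (e + 1) e L))
    (haL : a + 1 < L) (hL : L ≤ M 0 1 ∨ M 0 1 = 0) (ht : 2 * a + 1 < ℓ t) :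
    TransGen (Step cs.length {r | cs.IsReflection r ∧ ℓ r < ℓ t}) x (t * x) := by
  obtain ⟨g, hg⟩ := cs.exists_wordProd_alternatingWord_mul_inv e (a + 1) a
  rw [← hx, show a + 1 + a = 2 * a + 1 by ring] at hg
  have hxa := cs.length_wordProd_alternatingWord (f := e + 1) (n := a) (by omega)
  rw [fin_two_add_one_add_one, ← hx] at hxa
  have hjump : Step cs.length {r | cs.IsReflection r ∧ ℓ r < ℓ t} x
      (π (alternatingWord (e + 1) e (a + 1))) := by
    refine Step.of_mul_inv_mem ⟨?_, ?_⟩ ?_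
    · rw [hg]; exact cs.isReflection_wordProd_alternatingWord_odd _ _ a
    · rw [hg]
      exact ((cs.length_wordProd_le _).trans (length_alternatingWord _ _ _).le).trans_lt ht
    · rw [cs.length_wordProd_alternatingWord (by omega)]; omega
  rw [htx]
  exact .head hjump (cs.transGen_step_alternatingWord hX e (by omega) hL)

theorem transGen_step_of_opposite_alternatingWords_of_le {x t : W} {e : Fin 2} {a L : ℕ}
    (hX : ∀ k, cs.simple k ∈ {r | cs.IsReflection r ∧ ℓ r < ℓ t})
    (hx : x = π (alternatingWord e (e + 1) a)) (htx : t * x = π (alternatingWord (e + 1) e L))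
    (haL : a + 1 < L) (hL : L ≤ M 0 1 ∨ M 0 1 = 0) (ht : ℓ t ≤ 2 * a + 1) :
    TransGen (Step cs.length {r | cs.IsReflection r ∧ ℓ r < ℓ t}) x (t * x) := by
  obtain ⟨g, hg⟩ := cs.exists_wordProd_alternatingWord_mul_inv e L a
  rw [← htx, ← hx, mul_inv_cancel_right] at hg
  have hp : M 0 1 ≠ 0 ∧ M 0 1 < L + a := by
    by_contra! hp
    have := cs.length_wordProd_alternatingWord (f := g) (n := L + a) (by omega)
    rw [← hg] at this
    omega
  have ht : ℓ t = 2 * M 0 1 - (L + a) := by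
    rw [hg]; exact cs.length_wordProd_alternatingWord_of_le_of_le (by omega) (by omega)
  obtain ⟨g', hg'⟩ := cs.exists_wordProd_alternatingWord_mul_inv e L (L - 1)
  rw [← htx, show L + (L - 1) = 2 * (L - 1) + 1 by omega] at hg'
  have hclimb := cs.transGen_step_alternatingWord hX (e + 1) (j := a) (k := L - 1) (by omega)
    (by omega)
  have hv := cs.length_wordProd_alternatingWord (f := e + 1) (n := L - 1) (by omega)
  rw [fin_two_add_one_add_one, ← hx] at hclimb
  rw [fin_two_add_one_add_one] at hv
  refine .tail hclimb (Step.of_mul_inv_mem ⟨?_, ?_⟩ ?_)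
  · rw [hg']; exact cs.isReflection_wordProd_alternatingWord_odd _ _ _
  · rw [hg', cs.length_wordProd_alternatingWord_of_le_of_le (by omega) (by omega)]; omega
  · rw [hv, htx, cs.length_wordProd_alternatingWord hL]; omega

theorem transGen_step_mul_of_length_add_one_lt {x t : W} (h : ℓ x + 1 < ℓ (t * x)) :
    TransGen (Step cs.length {r | cs.IsReflection r ∧ ℓ r < ℓ t}) x (t * x) := by
  have hX (k : Fin 2) : cs.simple k ∈ {r | cs.IsReflection r ∧ ℓ r < ℓ t} :=
    ⟨cs.isReflection_simple k, by rw [cs.length_simple]; linarith [cs.length_mul_le t x]⟩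
  obtain ⟨e, he⟩ := cs.exists_eq_wordProd_alternatingWord (t * x)
  obtain ⟨f, hf⟩ := cs.exists_eq_wordProd_alternatingWord x
  have hL := cs.le_of_isReduced_alternatingWord (by rw [IsReduced, ← he, length_alternatingWord])
  rcases fin_two_eq_or_eq_add_one f e with rfl | rfl
  · have := cs.transGen_step_alternatingWord hX f (by omega : ℓ x < ℓ (t * x)) hL
    rwa [← hf, ← he] at this
  · rw [fin_two_add_one_add_one] at hf
    rcases lt_or_ge (2 * ℓ x + 1) (ℓ t) with ht | ht
    · exact cs.transGen_step_of_opposite_alternatingWords_of_lt hX hf he h hL ht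
    · exact cs.transGen_step_of_opposite_alternatingWords_of_le hX hf he h hL ht

end Chains

end CoxeterSystem

theorem stmt_12_general {W : Type*} [Group W] {M : CoxeterMatrix (Fin 2)}
    (cs : CoxeterSystem M W) (x t : W)
    (h : cs.length x + 1 < cs.length (t * x)) :
    ∃ (n : ℕ) (y : ℕ → W), 0 < n ∧ y 0 = x ∧ y n = t * x ∧
      ∀ i < n, cs.IsReflection (y (i + 1) * (y i)⁻¹) ∧
        cs.length (y (i + 1) * (y i)⁻¹) < cs.length t ∧
        cs.length (y i) < cs.length (y (i + 1)) := by
  obtain ⟨n, y, hn, hy0, hyn, hy⟩ := (cs.transGen_step_mul_of_length_add_one_lt h).exists_seq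
  refine ⟨n, y, hn, hy0, hyn, fun i hi => ?_⟩
  obtain ⟨r, hr, hyr, hlen⟩ := hy i hi
  rw [hyr, mul_inv_cancel_right]
  exact ⟨hr.1, hr.2, hyr ▸ hlen⟩

/-- in a dihedral Coxeter system (`|S| = 2`), if `ℓ(t x) > ℓ(x) + 1`
for a reflection `t`, then there is a chain `x < t₁ x < t₂ t₁ x < ⋯ < t_n ⋯ t₁ x = t x`
with each `tᵢ` a reflection of length smaller than `ℓ(t)`. -/
theorem stmt_12 {W : Type*} [Group W] {M : CoxeterMatrix (Fin 2)}
    (cs : CoxeterSystem M W) (x t : W) (ht : cs.IsReflection t)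
    (h : cs.length x + 1 < cs.length (t * x)) :
    ∃ (n : ℕ) (y : ℕ → W), 0 < n ∧ y 0 = x ∧ y n = t * x ∧
      ∀ i < n, cs.IsReflection (y (i + 1) * (y i)⁻¹) ∧
        cs.length (y (i + 1) * (y i)⁻¹) < cs.length t ∧
        cs.length (y i) < cs.length (y (i + 1)) :=
  stmt_12_general cs x t h
end

section
/- Let (W,S) be a Coxeter system and t, t' ∈ T with t ⊑ t'. Then t ≤ t' in the Bruhat order; that is, the identity map is a poset embedding (T, ⊑) ↪ (T, ≤). -/
open KBruhatPaper

private lemma sqle'_le {W : Type*} [Group W] {len : W → ℕ} {T : Set W} {a b : W}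
    (h : SqLe' len T a b) : leL len T a b := by
  rcases h with rfl | ⟨W', -, -, -, -, n, x, hx0, hxn, -, hstep⟩
  · exact Relation.ReflTransGen.refl
  · have key : ∀ i ≤ n, leL len T (x 0) (x i) := by
      intro i hi
      induction i with
      | zero => exact Relation.ReflTransGen.refl
      | succ j ih =>
        exact (ih (Nat.le_of_succ_le hi)).trans (hstep j hi).2.1
    rw [← hx0, ← hxn]
    exact key n le_rfl

/-- for reflections `t, t'`, `t ⊑ t'` implies `t ≤ t'` in the Bruhat
order; i.e. the identity map is a poset embedding `(T, ⊑) ↪ (T, ≤)`. -/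
theorem stmt_13 {B W : Type*} [Group W] {M : CoxeterMatrix B} (cs : CoxeterSystem M W)
    {t t' : W} (ht : cs.IsReflection t) (ht' : cs.IsReflection t')
    (h : SqLe cs.length (TSet cs) t t') :
    bruhatLE cs t t' := by
  clear ht ht'
  induction h with
  | single h1 => exact sqle'_le h1
  | tail _ h1 ih => exact Relation.ReflTransGen.trans ih (sqle'_le h1)
end

section
/- Let (W,S) be a dihedral Coxeter system (|S| = 2, possibly infinite). Then for all t, t' ∈ T: ℓ(t') < ℓ(t) if and only if t' ⊑ t and t' ≠ t. -/
open KBruhatPaper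

/-!
Lengths strictly increase along directed paths of the Bruhat graph, hence along `⊑'` and `⊑`;
this gives one direction. Conversely, in a dihedral group every element of odd length is a
reflection (its reduced word alternates, so it is an odd palindrome), so `u ≤ v` is a single
Bruhat edge as soon as `ℓ u < ℓ v` with `ℓ u + ℓ v` odd. For reflections `t'`, `t` with
`ℓ t' < ℓ t` (both odd), an element `z` with `ℓ z = ℓ t' + 1` therefore gives a path
`t' → z → t` inside `W` itself, whose canonical generators are the two simple reflections.
-/

open CoxeterSystem

namespace KBruhatPaper

variable {W : Type*} [Group W] {len : W → ℕ} {X T : Set W} {u v : W}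

theorem leL.eq_or_length_lt (h : leL len X u v) : u = v ∨ len u < len v := by
  induction h with
  | refl => exact .inl rfl
  | tail _ hstep ih =>
    obtain ⟨_, _, _, hlt⟩ := hstep
    rcases ih with rfl | h
    · exact .inr hlt
    · exact .inr (h.trans hlt)

theorem ltL.length_lt (h : ltL len X u v) : len u < len v :=
  h.1.eq_or_length_lt.resolve_left h.2

theorem Step.ltL (h : Step len X u v) : ltL len X u v :=
  ⟨.single h, by rintro rfl; obtain ⟨_, _, _, h⟩ := h; exact lt_irrefl _ h⟩

theorem SqLe'.eq_or_length_lt (h : SqLe' len T u v) : u = v ∨ len u < len v := by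
  rcases h with rfl | ⟨-, -, -, -, -, n, x, rfl, rfl, -, hpath⟩
  · exact .inl rfl
  rcases Nat.eq_zero_or_pos n with rfl | hn
  · exact .inl rfl
  · exact .inr <| strictMonoOn_Iic_of_lt_succ (ψ := len ∘ x)
      (fun i hi => (hpath i hi).2.length_lt) (Set.mem_Iic.2 n.zero_le) Set.self_mem_Iic hn

theorem SqLe.eq_or_length_lt (h : SqLe len T u v) : u = v ∨ len u < len v := by
  induction h with
  | single h => exact h.eq_or_length_lt
  | tail _ hbc ih =>
    rcases ih with rfl | h₁
    · exact hbc.eq_or_length_lt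
    · rcases hbc.eq_or_length_lt with rfl | h₂
      · exact .inr h₁
      · exact .inr (h₁.trans h₂)

end KBruhatPaper

namespace CoxeterSystem

variable {W : Type*} [Group W]

section General

variable {B : Type*} {M : CoxeterMatrix B} (cs : CoxeterSystem M W)

theorem canGens_top : CanGens cs.length (TSet cs) ⊤ = Set.range cs.simple := by
  ext t
  simp only [CanGens, NSet, TSet, Subgroup.coe_top, Set.inter_univ, Set.mem_ofPred_eq]
  constructor
  · rintro ⟨ht, hN⟩
    have ht₁ : t ≠ 1 := by
      rintro rfl
      simpa using ht.odd_length
    obtain ⟨i, hi⟩ := cs.exists_leftDescent_of_ne_one ht₁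
    have hi' : cs.simple i ∈ {r | cs.IsReflection r ∧ cs.length (r * t) < cs.length t} :=
      ⟨cs.isReflection_simple i, hi⟩
    rw [hN] at hi'
    exact ⟨i, hi'⟩
  · rintro ⟨i, rfl⟩
    refine ⟨cs.isReflection_simple i, Set.ext fun r => ?_⟩
    simp only [Set.mem_ofPred_eq, Set.mem_singleton_iff, length_simple, Nat.lt_one_iff,
      length_eq_zero_iff, mul_eq_one_iff_eq_inv, inv_simple]
    exact ⟨And.right, fun h => ⟨h ▸ cs.isReflection_simple i, h⟩⟩

theorem exists_length_eq_of_le {w : W} {k : ℕ} (hk : k ≤ cs.length w) :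
    ∃ z, cs.length z = k := by
  obtain ⟨ω, hω, rfl⟩ := cs.exists_isReduced w
  refine ⟨cs.wordProd (ω.take k), ?_⟩
  rw [(hω.take k).eq, List.length_take, ← hω.eq]
  exact min_eq_left hk

theorem isReflection_wordProd_alternatingWord (i j : B) (k : ℕ) :
    cs.IsReflection (cs.wordProd (alternatingWord i j (2 * k + 1))) := by
  rw [← cs.getElem_leftInvSeq_alternatingWord j i (k + 1) k (by omega)]
  exact cs.isReflection_of_mem_leftInvSeq _ (List.getElem_mem _)

end General

section Dihedral

variable {M : CoxeterMatrix (Fin 2)} (cs : CoxeterSystem M W)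

/-- The simple reflections map to the reflections `sr 0`, `sr 1` of the dihedral group of order
`2 * M 0 1` (infinite when `M 0 1 = 0`). -/
theorem simple_injective_of_fin_two : Function.Injective cs.simple := by
  open DihedralGroup in
  let f : Fin 2 → DihedralGroup (M 0 1) := fun i => sr (i.val : ZMod (M 0 1))
  have hf : M.IsLiftable f := by
    intro i j
    fin_cases i <;> fin_cases j <;> simp [f, sr_mul_sr, M.symmetric 1 0]
  have hf_inj : Function.Injective f := by
    have := ZMod.nontrivial_iff.2 (M.off_diagonal 0 1 (by decide))
    intro i j h
    fin_cases i <;> fin_cases j <;> simp_all [f]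
  refine Function.Injective.of_comp (f := cs.lift ⟨f, hf⟩) ?_
  convert hf_inj
  ext i
  exact cs.lift_apply_simple hf i

theorem exists_eq_wordProd_alternatingWord_s14 (w : W) :
    ∃ i j : Fin 2, i ≠ j ∧ w = cs.wordProd (alternatingWord i j (cs.length w)) := by
  induction hn : cs.length w generalizing w with
  | zero => exact ⟨0, 1, by decide, by simp [alternatingWord, cs.length_eq_zero_iff.1 hn]⟩
  | succ n ih =>
    obtain ⟨k, hk⟩ := cs.exists_rightDescent_of_ne_one (w := w) (by rintro rfl; simp at hn)
    obtain ⟨i, j, hij, hw⟩ := ih (w * cs.simple k) (by have := cs.isRightDescent_iff.1 hk; omega)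
    have hw' : w = cs.wordProd (alternatingWord i j n) * cs.simple k := by
      rw [← hw, simple_mul_simple_cancel_right]
    cases n with
    | zero => exact ⟨k + 1, k, by omega, by simp [hw', alternatingWord]⟩
    | succ m =>
      have hki : k = i := by
        by_contra hki
        have hshort : w = cs.wordProd (alternatingWord j i m) := by
          rw [hw', alternatingWord_succ, wordProd_concat, show k = j by omega,
            simple_mul_simple_cancel_right]
        have := cs.length_wordProd_le (alternatingWord j i m)
        rw [← hshort, hn, length_alternatingWord] at this
        omega
      exact ⟨j, i, hij.symm, by rw [hw', hki, alternatingWord_succ j i, wordProd_concat]⟩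

theorem isReflection_of_odd_length {w : W} (h : Odd (cs.length w)) : cs.IsReflection w := by
  obtain ⟨k, hk⟩ := h
  obtain ⟨i, j, -, hw⟩ := cs.exists_eq_wordProd_alternatingWord_s14 w
  rw [hw, hk]
  exact cs.isReflection_wordProd_alternatingWord i j k

theorem isReflection_mul_inv_of_odd {u v : W} (h : Odd (cs.length u + cs.length v)) :
    cs.IsReflection (u * v⁻¹) := by
  apply cs.isReflection_of_odd_length
  rw [Nat.odd_iff, cs.length_mul_mod_two, length_inv, ← Nat.odd_iff]
  exact h

end Dihedral

end CoxeterSystem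

namespace KBruhatPaper

variable {W : Type*} [Group W] {M : CoxeterMatrix (Fin 2)} (cs : CoxeterSystem M W)

theorem step_of_length_lt_of_odd {u v : W} (hlt : cs.length u < cs.length v)
    (hodd : Odd (cs.length u + cs.length v)) : Step cs.length (TSet cs) u v :=
  ⟨v * u⁻¹, cs.isReflection_mul_inv_of_odd (by rwa [add_comm]), by group, hlt⟩

theorem sqLe'_of_length_lt_of_even {u v : W} (hlt : cs.length u < cs.length v)
    (heven : Even (cs.length u + cs.length v)) : SqLe' cs.length (TSet cs) u v := by
  obtain ⟨z, hz⟩ := cs.exists_length_eq_of_le (w := v) (k := cs.length u + 1) hlt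
  have hodd_uz : Odd (cs.length u + cs.length z) := by rw [hz]; exact ⟨cs.length u, by ring⟩
  have hodd_zv : Odd (cs.length z + cs.length v) := by
    rw [hz, add_right_comm]; exact heven.add_one
  have hzv : cs.length z < cs.length v := by
    obtain ⟨r, hr⟩ := heven
    omega
  let x : ℕ → W := fun i => if i = 0 then u else if i = 1 then z else v
  refine .inr ⟨⊤, ⟨_, ?_, cs.subgroup_closure_range_simple.symm⟩, Subgroup.mem_top _,
    Subgroup.mem_top _, ?_, 2, x, rfl, rfl, fun _ _ => Subgroup.mem_top _, ?_⟩
  · rintro _ ⟨i, rfl⟩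
    exact cs.isReflection_simple i
  · rw [canGens_top, ← Set.image_univ, cs.simple_injective_of_fin_two.encard_image,
      Set.encard_univ]
    simp
  · intro i hi
    interval_cases i
    · exact ⟨cs.isReflection_mul_inv_of_odd hodd_uz,
        (step_of_length_lt_of_odd cs (by omega) hodd_uz).ltL⟩
    · exact ⟨cs.isReflection_mul_inv_of_odd hodd_zv,
        (step_of_length_lt_of_odd cs hzv hodd_zv).ltL⟩

end KBruhatPaper

/-- in a dihedral Coxeter system (`|S| = 2`, possibly infinite), for
reflections `t, t'` one has `ℓ(t') < ℓ(t)` iff `t' ⊑ t` and `t' ≠ t`. -/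
theorem stmt_14 {W : Type*} [Group W] {M : CoxeterMatrix (Fin 2)}
    (cs : CoxeterSystem M W) {t t' : W}
    (ht : cs.IsReflection t) (ht' : cs.IsReflection t') :
    cs.length t' < cs.length t ↔ (SqLe cs.length (TSet cs) t' t ∧ t' ≠ t) := by
  constructor
  · intro hlt
    have heven : Even (cs.length t' + cs.length t) := ht'.odd_length.add_odd ht.odd_length
    exact ⟨.single (sqLe'_of_length_lt_of_even cs hlt heven), by rintro rfl; exact lt_irrefl _ hlt⟩
  · rintro ⟨hsq, hne⟩
    exact hsq.eq_or_length_lt.resolve_left hne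
end
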